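/- arXiv:1806.11028 — 2 statements merged into one kernel-verified Lean document; each statement's English description precedes it below -/
import Mathlib

section
/- Let A ∈ Mat_n(𝕋) and n̄ = lcm(1,2,…,n). If rk_tr(A^n̄) = n, then per(A^n̄) = tr(A^n̄). -/
attribute [local instance] Classical.propDecidable

/-- The tropical (max-plus) semiring carrier: `ℝ ∪ {−∞}`. -/
abbrev Trop : Type := WithBot ℝ

/-- Tropical matrix multiplication: `(A ⊙ B)_{i,j} = max_k (A_{i,k} + B_{k,j})`. -/
def tmul {n m p : ℕ} (A : Matrix (Fin n) (Fin m) Trop) (B : Matrix (Fin m) (Fin p) Trop) :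
    Matrix (Fin n) (Fin p) Trop :=
  fun i j => Finset.univ.sup (fun k => A i k + B k j)

/-- The tropical identity matrix. -/
def tId (n : ℕ) : Matrix (Fin n) (Fin n) Trop :=
  fun i j => if i = j then (0 : Trop) else ⊥

/-- Tropical matrix power. -/
def tPow {n : ℕ} (A : Matrix (Fin n) (Fin n) Trop) : ℕ → Matrix (Fin n) (Fin n) Trop
  | 0 => tId n
  | t + 1 => tmul A (tPow A t)

/-- Weight of a permutation: `ω(π) = Σ_i A_{i,π(i)}`. -/
def permWeight {n : ℕ} (A : Matrix (Fin n) (Fin n) Trop) (π : Equiv.Perm (Fin n)) : Trop :=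
  ∑ i, A i (π i)

/-- Tropical permanent: `per(A) = max_π ω(π)`. -/
def tPer {n : ℕ} (A : Matrix (Fin n) (Fin n) Trop) : Trop :=
  Finset.univ.sup (fun π : Equiv.Perm (Fin n) => permWeight A π)

/-- Nonsingular: exactly one permutation attains the permanent. -/
def Nonsingular {n : ℕ} (A : Matrix (Fin n) (Fin n) Trop) : Prop :=
  ∃! π : Equiv.Perm (Fin n), permWeight A π = tPer A

/-- Tropical rank: the largest `k` such that `A` has a nonsingular `k × k` submatrix. -/
noncomputable def tropRank {n : ℕ} (A : Matrix (Fin n) (Fin n) Trop) : ℕ :=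
  sSup {k : ℕ | ∃ (r : Fin k → Fin n) (c : Fin k → Fin n),
    Function.Injective r ∧ Function.Injective c ∧
    Nonsingular (fun i j => A (r i) (c j))}

/-- Factor rank: the smallest `k` such that `A = B ⊙ C` with `B` of size `n × k` and `C` of
size `k × n`. -/
noncomputable def facRank {n : ℕ} (A : Matrix (Fin n) (Fin n) Trop) : ℕ :=
  sInf {k : ℕ | ∃ (B : Matrix (Fin n) (Fin k) Trop) (C : Matrix (Fin k) (Fin n) Trop),
    A = tmul B C}

/-- Trace: `tr(A) = Σ_i A_{i,i}` in `ℝ ∪ {−∞}`. -/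
def tTrace {n : ℕ} (A : Matrix (Fin n) (Fin n) Trop) : Trop := ∑ i, A i i

/-- Evaluation of a word over the alphabet `{a, b}` (with `a = true`, `b = false`) at the
pair of tropical matrices `(A, B)`, i.e. `a ↦ A`, `b ↦ B`.  (On the empty word it returns
the identity matrix; we only use it on nonempty words.) -/
def mEval {n : ℕ} (A B : Matrix (Fin n) (Fin n) Trop) : List Bool → Matrix (Fin n) (Fin n) Trop
  | [] => tId n
  | x :: w => tmul (if x then A else B) (mEval A B w)

/-- `lcm(1, 2, …, n)`. -/
def nbar (n : ℕ) : ℕ := (Finset.Icc 1 n).lcm id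

/-- A walk on the digraph `G(A)`, given by its list of visited nodes: consecutive nodes must
be joined by an arc, i.e. have weight `≠ −∞`. -/
def IsWalk {n : ℕ} (A : Matrix (Fin n) (Fin n) Trop) (p : List (Fin n)) : Prop :=
  p.Chain' (fun i j => A i j ≠ ⊥)

/-- The weight of a walk: sum of the weights of its arcs. -/
def walkWeight {n : ℕ} (A : Matrix (Fin n) (Fin n) Trop) (p : List (Fin n)) : Trop :=
  ((p.zip p.tail).map (fun q => A q.1 q.2)).sum

/-- The set of nodes on the cycle of the permutation `τ` containing `i`. -/
noncomputable def cycFinset {n : ℕ} (τ : Equiv.Perm (Fin n)) (i : Fin n) : Finset (Fin n) :=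
  Finset.univ.filter (fun j => τ.SameCycle i j)

/-- `μ_i`: the average weight of the unique cycle of `τ` containing `i`. -/
noncomputable def mu {n : ℕ} (A : Matrix (Fin n) (Fin n) Trop) (τ : Equiv.Perm (Fin n))
    (i : Fin n) : ℝ :=
  (∑ j ∈ cycFinset τ i, WithBot.unbotD 0 (A j (τ j))) / (cycFinset τ i).card

/-- Upper triangular tropical matrix: all entries below the diagonal are `−∞`. -/
def UpperTri {n : ℕ} (A : Matrix (Fin n) (Fin n) Trop) : Prop :=
  ∀ i j : Fin n, j < i → A i j = ⊥

/-- Word substitution: replace each letter `a` (`= true`) of `w` by `w₁` and each letter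
`b` (`= false`) by `w₂`. -/
def subst (w w₁ w₂ : List Bool) : List Bool :=
  w.flatMap (fun x => if x then w₁ else w₂)

/-- `k`-fold concatenation `w^k` of a word. -/
def wpow (w : List Bool) : ℕ → List Bool
  | 0 => []
  | t + 1 => w ++ wpow w t

/-- Evaluation of a word over an alphabet `α` in a semigroup `S` under the assignment
`f : α → S`; returns `none` on the empty word. -/
def aEval {S : Type*} [Mul S] {α : Type*} (f : α → S) : List α → Option S
  | [] => none
  | x :: w => some (w.foldl (fun acc y => acc * f y) (f x))

/-!
Let `σ` be the unique optimal permutation of `M = A ^ n̄` and realise each entry `M z (σ z)` by an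
optimal walk of length `n̄` in `A`. If two of these walks met at some time, exchanging their tails
would make `σ * swap i j` optimal too; so at every time the walks occupy distinct nodes, each step
of the family is a permutation, and `per M ≤ n̄ • per A`. Conversely, a permutation `g` attaining
`per A` satisfies `g ^ n̄ = 1`, so following `g` for `n̄` steps from every node gives closed walks,
whence `n̄ • per A ≤ tr M ≤ per M`.
-/

open Finset

section

variable {n : ℕ}

lemma nbar_ne_zero (n : ℕ) : nbar n ≠ 0 := by
  simp [nbar, Finset.lcm_eq_zero_iff]

lemma perm_pow_nbar (g : Equiv.Perm (Fin n)) : g ^ nbar n = 1 := by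
  rw [← orderOf_dvd_iff_pow_eq_one, ← Equiv.Perm.lcm_cycleType, Multiset.lcm_dvd]
  intro d hd
  have hle : d ≤ n := calc
    d ≤ g.cycleType.sum := Multiset.le_sum_of_mem hd
    _ = #g.support := g.sum_cycleType
    _ ≤ n := by simpa using card_le_univ g.support
  exact dvd_lcm (mem_Icc.mpr ⟨(g.two_le_of_mem_cycleType hd).trans' one_le_two, hle⟩)

lemma permWeight_le_tPer (M : Matrix (Fin n) (Fin n) Trop) (π : Equiv.Perm (Fin n)) :
    permWeight M π ≤ tPer M :=
  le_sup (f := permWeight M) (mem_univ π)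

lemma tTrace_le_tPer (M : Matrix (Fin n) (Fin n) Trop) : tTrace M ≤ tPer M :=
  permWeight_le_tPer M 1

lemma sum_le_tPer_of_injective (M : Matrix (Fin n) (Fin n) Trop) {f g : Fin n → Fin n}
    (hf : Function.Injective f) (hg : Function.Injective g) : ∑ z, M (f z) (g z) ≤ tPer M := by
  let e := Equiv.ofBijective f hf.bijective_of_finite
  let e' := Equiv.ofBijective g hg.bijective_of_finite
  calc ∑ z, M (f z) (g z) = permWeight M (e.symm.trans e') := by
        unfold permWeight
        rw [← Equiv.sum_comp e (fun v => M v ((e.symm.trans e') v))]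
        simp [e, e']
    _ ≤ tPer M := permWeight_le_tPer M _

lemma permWeight_le_permWeight_mul_swap (M : Matrix (Fin n) (Fin n) Trop) (σ : Equiv.Perm (Fin n))
    {i j : Fin n} (hij : i ≠ j) (h : M i (σ i) + M j (σ j) ≤ M i (σ j) + M j (σ i)) :
    permWeight M σ ≤ permWeight M (σ * Equiv.swap i j) := by
  simp only [permWeight, ← sum_add_sum_compl {i, j}, sum_pair hij]
  gcongr ?_ + ?_
  · simpa using h
  · refine (sum_congr rfl fun z hz => ?_).le
    simp only [mem_compl, mem_insert, mem_singleton, not_or] at hz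
    simp [Equiv.swap_apply_of_ne_of_ne hz.1 hz.2]

lemma permWeight_reindex (M : Matrix (Fin n) (Fin n) Trop) (R C π : Equiv.Perm (Fin n)) :
    permWeight (fun i j => M (R i) (C j)) π = permWeight M (C * π * R⁻¹) := by
  unfold permWeight
  rw [← Equiv.sum_comp R (fun i => M i ((C * π * R⁻¹) i))]
  simp

lemma tPer_reindex (M : Matrix (Fin n) (Fin n) Trop) (R C : Equiv.Perm (Fin n)) :
    tPer (fun i j => M (R i) (C j)) = tPer M := by
  let Φ : Equiv.Perm (Fin n) ≃ Equiv.Perm (Fin n) := (Equiv.mulLeft C).trans (Equiv.mulRight R⁻¹)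
  unfold tPer
  conv_rhs => rw [← univ_map_equiv_to_embedding Φ, sup_map]
  exact sup_congr rfl fun π _ => permWeight_reindex M R C π

lemma Nonsingular.of_reindex {M : Matrix (Fin n) (Fin n) Trop} {R C : Equiv.Perm (Fin n)}
    (h : Nonsingular fun i j => M (R i) (C j)) : Nonsingular M := by
  let Φ : Equiv.Perm (Fin n) ≃ Equiv.Perm (Fin n) := (Equiv.mulLeft C).trans (Equiv.mulRight R⁻¹)
  rw [Nonsingular, Φ.symm.existsUnique_congr_left]
  simpa [Nonsingular, permWeight_reindex, tPer_reindex, Φ] using h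

lemma nonsingular_fin_zero (M : Matrix (Fin 0) (Fin 0) Trop) : Nonsingular M :=
  ⟨1, le_antisymm (permWeight_le_tPer M 1)
    (Finset.sup_le fun π _ => by rw [Subsingleton.elim π 1]), fun π _ => Subsingleton.elim π 1⟩

lemma tropRank_mem (M : Matrix (Fin n) (Fin n) Trop) :
    tropRank M ∈ {k : ℕ | ∃ r c : Fin k → Fin n, Function.Injective r ∧ Function.Injective c ∧
      Nonsingular fun i j => M (r i) (c j)} := by
  apply Nat.sSup_mem
  · exact ⟨0, Fin.elim0, Fin.elim0, fun a => a.elim0, fun a => a.elim0, nonsingular_fin_zero _⟩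
  · exact ⟨n, fun k ⟨r, _, hr, _⟩ => by simpa using Fintype.card_le_of_injective r hr⟩

lemma nonsingular_of_tropRank_eq {M : Matrix (Fin n) (Fin n) Trop} (h : tropRank M = n) :
    Nonsingular M := by
  have hM := tropRank_mem M
  rw [h] at hM
  obtain ⟨r, c, hr, hc, hM⟩ := hM
  exact Nonsingular.of_reindex (R := Equiv.ofBijective r hr.bijective_of_finite)
    (C := Equiv.ofBijective c hc.bijective_of_finite) hM

lemma tmul_tId (A : Matrix (Fin n) (Fin n) Trop) : tmul A (tId n) = A := by
  ext i j
  apply le_antisymm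
  · refine Finset.sup_le fun k _ => ?_
    by_cases hk : k = j <;> simp [tId, hk]
  · calc A i j = A i j + tId n j j := by simp [tId]
      _ ≤ tmul A (tId n) i j := le_sup (f := fun k => A i k + tId n k j) (mem_univ j)

def walkSum (A : Matrix (Fin n) (Fin n) Trop) (f : ℕ → Fin n) (t : ℕ) : Trop :=
  ∑ δ ∈ range t, A (f δ) (f (δ + 1))

lemma walkSum_le_tPow (A : Matrix (Fin n) (Fin n) Trop) (t : ℕ) (f : ℕ → Fin n) :
    walkSum A f t ≤ tPow A t (f 0) (f t) := by
  induction t generalizing f with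
  | zero => simp [walkSum, tPow, tId]
  | succ t ih =>
    calc walkSum A f (t + 1) = A (f 0) (f 1) + walkSum A (fun δ => f (δ + 1)) t := by
          rw [walkSum, walkSum, sum_range_succ', add_comm]
      _ ≤ A (f 0) (f 1) + tPow A t (f 1) (f (t + 1)) := by gcongr; exact ih _
      _ ≤ tPow A (t + 1) (f 0) (f (t + 1)) :=
          le_sup (f := fun k => A (f 0) k + tPow A t k (f (t + 1))) (mem_univ (f 1))

lemma exists_tPow_le_walkSum (A : Matrix (Fin n) (Fin n) Trop) {t : ℕ} (ht : t ≠ 0) (z y : Fin n) :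
    ∃ f : ℕ → Fin n, f 0 = z ∧ f t = y ∧ tPow A t z y ≤ walkSum A f t := by
  obtain ⟨t, rfl⟩ := Nat.exists_eq_succ_of_ne_zero ht
  clear ht
  induction t generalizing z with
  | zero =>
    refine ⟨fun δ => if δ = 0 then z else y, by simp, by simp, ?_⟩
    simp [walkSum, tPow, tmul_tId]
  | succ t ih =>
    obtain ⟨k, -, hk⟩ := exists_mem_eq_sup univ ⟨z, mem_univ z⟩
      fun k => A z k + tPow A (t + 1) k y
    obtain ⟨f, hf0, hft, hf⟩ := ih k
    refine ⟨fun δ => Nat.casesOn δ z f, rfl, hft, ?_⟩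
    calc tPow A (t + 1 + 1) z y = A z k + tPow A (t + 1) k y := hk
      _ ≤ A z k + walkSum A f (t + 1) := by gcongr
      _ = _ := by
          rw [walkSum, walkSum, sum_range_succ' _ (t + 1), add_comm, ← hf0]
          rfl

lemma walkSum_splice (A : Matrix (Fin n) (Fin n) Trop) {f g : ℕ → Fin n} {s m : ℕ} (hs : s ≤ m)
    (hfg : f s = g s) :
    walkSum A (fun t => if t ≤ s then f t else g t) m =
      walkSum A f s + ∑ δ ∈ Ico s m, A (g δ) (g (δ + 1)) := by
  rw [walkSum, walkSum, ← sum_range_add_sum_Ico _ hs]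
  congr 1
  · refine sum_congr rfl fun δ hδ => ?_
    rw [mem_range] at hδ
    rw [if_pos hδ.le, if_pos (Nat.succ_le_of_lt hδ)]
  · refine sum_congr rfl fun δ hδ => ?_
    rw [mem_Ico] at hδ
    rw [if_neg (by omega : ¬δ + 1 ≤ s)]
    split_ifs with h
    · rw [le_antisymm h hδ.1, hfg]
    · rfl

lemma walkSum_add_walkSum_le_of_meet (A : Matrix (Fin n) (Fin n) Trop) {f g : ℕ → Fin n}
    {s m : ℕ} (hs : s ≤ m) (hfg : f s = g s) :
    walkSum A f m + walkSum A g m ≤ tPow A m (f 0) (g m) + tPow A m (g 0) (f m) := by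
  have hend : ∀ u v : ℕ → Fin n, u s = v s → (if m ≤ s then u m else v m) = v m := by
    intro u v huv
    split_ifs with h
    · rwa [le_antisymm h hs]
    · rfl
  calc walkSum A f m + walkSum A g m
      = (walkSum A f s + ∑ δ ∈ Ico s m, A (f δ) (f (δ + 1))) +
          (walkSum A g s + ∑ δ ∈ Ico s m, A (g δ) (g (δ + 1))) := by
        rw [walkSum, walkSum, walkSum, walkSum, sum_range_add_sum_Ico _ hs,
          sum_range_add_sum_Ico _ hs]
    _ = walkSum A (fun t => if t ≤ s then f t else g t) m +
          walkSum A (fun t => if t ≤ s then g t else f t) m := by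
        rw [walkSum_splice A hs hfg, walkSum_splice A hs hfg.symm]
        abel
    _ ≤ tPow A m (f 0) (g m) + tPow A m (g 0) (f m) := by
        gcongr
        · simpa [hend f g hfg] using walkSum_le_tPow A m (fun t => if t ≤ s then f t else g t)
        · simpa [hend g f hfg.symm] using walkSum_le_tPow A m (fun t => if t ≤ s then g t else f t)

lemma walks_injective_of_unique_optimal (A : Matrix (Fin n) (Fin n) Trop) {m : ℕ}
    {σ : Equiv.Perm (Fin n)} (hσ : permWeight (tPow A m) σ = tPer (tPow A m))
    (huniq : ∀ τ, permWeight (tPow A m) τ = tPer (tPow A m) → τ = σ)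
    {x : Fin n → ℕ → Fin n} (hx0 : ∀ z, x z 0 = z) (hxm : ∀ z, x z m = σ z)
    (hx : ∀ z, tPow A m z (σ z) ≤ walkSum A (x z) m) {s : ℕ} (hs : s ≤ m) :
    Function.Injective fun z => x z s := by
  intro i j hij
  by_contra hne
  have hexch : tPow A m i (σ i) + tPow A m j (σ j) ≤ tPow A m i (σ j) + tPow A m j (σ i) :=
    calc tPow A m i (σ i) + tPow A m j (σ j) ≤ walkSum A (x i) m + walkSum A (x j) m :=
          add_le_add (hx i) (hx j)
      _ ≤ tPow A m i (σ j) + tPow A m j (σ i) := by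
          simpa [hx0, hxm] using walkSum_add_walkSum_le_of_meet A hs hij
  have hopt : permWeight (tPow A m) (σ * Equiv.swap i j) = tPer (tPow A m) :=
    le_antisymm (permWeight_le_tPer _ _) (hσ ▸ permWeight_le_permWeight_mul_swap _ σ hne hexch)
  exact hne (Equiv.swap_eq_one_iff.mp (mul_eq_left.mp (huniq _ hopt)))

lemma sum_walkSum_le_nsmul_tPer (A : Matrix (Fin n) (Fin n) Trop) {m : ℕ} {x : Fin n → ℕ → Fin n}
    (hx : ∀ s ≤ m, Function.Injective fun z => x z s) :
    ∑ z, walkSum A (x z) m ≤ m • tPer A :=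
  calc ∑ z, walkSum A (x z) m = ∑ δ ∈ range m, ∑ z, A (x z δ) (x z (δ + 1)) := sum_comm
    _ ≤ ∑ δ ∈ range m, tPer A := sum_le_sum fun δ hδ =>
        sum_le_tPer_of_injective A (hx δ (mem_range.mp hδ).le) (hx (δ + 1) (mem_range.mp hδ))
    _ = m • tPer A := by simp

lemma nsmul_permWeight_le_tTrace_tPow (A : Matrix (Fin n) (Fin n) Trop) {g : Equiv.Perm (Fin n)}
    {m : ℕ} (hg : g ^ m = 1) : m • permWeight A g ≤ tTrace (tPow A m) :=
  calc m • permWeight A g = ∑ δ ∈ range m, permWeight A g := by simp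
    _ = ∑ δ ∈ range m, ∑ v, A ((g ^ δ) v) ((g ^ (δ + 1)) v) := sum_congr rfl fun δ _ => by
        unfold permWeight
        rw [← Equiv.sum_comp (g ^ δ) (fun v => A v (g v))]
        simp [pow_succ']
    _ = ∑ v, walkSum A (fun δ => (g ^ δ) v) m := sum_comm
    _ ≤ ∑ v, tPow A m v v := sum_le_sum fun v _ => by
        simpa [hg] using walkSum_le_tPow A m (fun δ => (g ^ δ) v)

lemma nsmul_tPer_le_tTrace_tPow_nbar (A : Matrix (Fin n) (Fin n) Trop) :
    nbar n • tPer A ≤ tTrace (tPow A (nbar n)) := by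
  obtain ⟨g, -, hg⟩ := exists_mem_eq_sup univ ⟨1, mem_univ 1⟩ (permWeight A)
  rw [tPer, hg]
  exact nsmul_permWeight_le_tTrace_tPow A (perm_pow_nbar g)

end

/-- Lemma `per(A^n̄) = tr(A^n̄)` when `rk_tr(A^n̄) = n`. -/
theorem per_eq_trace_of_tropRank_eq {n : ℕ} (A : Matrix (Fin n) (Fin n) Trop)
    (h : tropRank (tPow A (nbar n)) = n) :
    tPer (tPow A (nbar n)) = tTrace (tPow A (nbar n)) := by
  obtain ⟨σ, hσ, huniq⟩ := nonsingular_of_tropRank_eq h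
  choose x hx0 hxm hx using fun z => exists_tPow_le_walkSum A (nbar_ne_zero n) z (σ z)
  refine le_antisymm ?_ (tTrace_le_tPer _)
  calc tPer (tPow A (nbar n)) = permWeight (tPow A (nbar n)) σ := hσ.symm
    _ ≤ ∑ z, walkSum A (x z) (nbar n) := sum_le_sum fun z _ => hx z
    _ ≤ nbar n • tPer A := sum_walkSum_le_nsmul_tPer A fun s hs =>
        walks_injective_of_unique_optimal A hσ huniq hx0 hxm hx hs
    _ ≤ tTrace (tPow A (nbar n)) := nsmul_tPer_le_tTrace_tPow_nbar A
end

section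
/- Let u, v ∈ {a,b}⁺ be words such that (u,v) is a semigroup identity satisfied by the monoid U_n(𝕋) of upper triangular n × n tropical matrices. Let A, B ∈ Mat_n(𝕋) satisfy per(A) = tr(A), per(B) = tr(B), and rk_tr(u(A,B)) = rk_tr(v(A,B)) = n. Then u(A,B) = v(A,B). -/
attribute [local instance] Classical.propDecidable

/-!
Write `W = w(A,B)`: its entries are the maximal weights of paths through the layered graph whose
`t`-th layer carries the matrix of the `t`-th letter. Full tropical rank makes `W` nonsingular,
and the paths realising its optimal permutation occupy distinct nodes at every time, since
exchanging two tails at a common node would give a second optimal permutation. Each layer of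
these paths is thus a permutation, so `per = tr` for the letters forces every diagonal entry of
`W` to be the finite weight of the constant loop. Then a closed detour of an optimal path can be
replaced by staying in place, so some optimal path never returns to a node it has left;
labelling the nodes by first visit makes it monotone, i.e. a path for upper triangular parts of
`A` and `B`, where `u` and `v` agree. Hence `u(A,B) ≤ v(A,B)` entrywise, and symmetrically.
-/

namespace TropMatrix

variable {n : ℕ}

lemma _root_.WithBot.eq_of_sum_eq_sum_of_le {ι α : Type*} [AddCommMonoid α] [PartialOrder α]
    [IsOrderedCancelAddMonoid α] {s : Finset ι} {f g : ι → WithBot α}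
    (hle : ∀ i ∈ s, f i ≤ g i) (hsum : ∑ i ∈ s, f i = ∑ i ∈ s, g i) (hfin : ∑ i ∈ s, g i ≠ ⊥) :
    ∀ i ∈ s, f i = g i := by
  have hg : ∀ i ∈ s, g i ≠ ⊥ := by simpa [WithBot.sum_eq_bot_iff] using hfin
  have hf : ∀ i ∈ s, f i ≠ ⊥ := by
    rw [← hsum] at hfin
    simpa [WithBot.sum_eq_bot_iff] using hfin
  have coe_unbotD : ∀ {x : WithBot α}, x ≠ ⊥ → ((x.unbotD 0 : α) : WithBot α) = x := fun hx => by
    obtain ⟨r, rfl⟩ := WithBot.ne_bot_iff_exists.mp hx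
    rfl
  have hle' : ∀ i ∈ s, (f i).unbotD 0 ≤ (g i).unbotD 0 := fun i hi => by
    rw [← WithBot.coe_le_coe, coe_unbotD (hf i hi), coe_unbotD (hg i hi)]
    exact hle i hi
  have hsum' : ∑ i ∈ s, (f i).unbotD 0 = ∑ i ∈ s, (g i).unbotD 0 := by
    rw [← WithBot.coe_inj, WithBot.coe_sum, WithBot.coe_sum,
      Finset.sum_congr rfl fun i hi => coe_unbotD (hf i hi),
      Finset.sum_congr rfl fun i hi => coe_unbotD (hg i hi), hsum]
  intro i hi
  rw [← coe_unbotD (hf i hi), ← coe_unbotD (hg i hi),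
    (Finset.sum_eq_sum_iff_of_le hle').mp hsum' i hi]

section Permanent

lemma permWeight_submatrix (W : Matrix (Fin n) (Fin n) Trop) (e f π : Equiv.Perm (Fin n)) :
    permWeight (W.submatrix e f) π = permWeight W (f * (π * e⁻¹)) := by
  unfold permWeight
  rw [← Equiv.sum_comp e (fun k => W k ((f * (π * e⁻¹)) k))]
  simp

lemma tPer_submatrix (W : Matrix (Fin n) (Fin n) Trop) (e f : Equiv.Perm (Fin n)) :
    tPer (W.submatrix e f) = tPer W := by
  let Φ := (Equiv.mulRight e⁻¹).trans (Equiv.mulLeft f)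
  rw [tPer, tPer]
  conv_rhs => rw [← Finset.map_univ_equiv Φ, Finset.sup_map]
  exact Finset.sup_congr rfl fun π _ => permWeight_submatrix W e f π

lemma nonsingular_submatrix_iff (W : Matrix (Fin n) (Fin n) Trop) (e f : Equiv.Perm (Fin n)) :
    Nonsingular (W.submatrix e f) ↔ Nonsingular W :=
  ((Equiv.mulRight e⁻¹).trans (Equiv.mulLeft f)).existsUnique_congr fun π => by
    rw [permWeight_submatrix, tPer_submatrix]
    rfl

lemma nonsingular_of_isEmpty (W : Matrix (Fin 0) (Fin 0) Trop) : Nonsingular W :=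
  ⟨1, le_antisymm (Finset.le_sup (Finset.mem_univ _))
      (Finset.sup_le fun π _ => (congrArg (permWeight W) (Subsingleton.elim π 1)).le),
    fun π _ => Subsingleton.elim π 1⟩

lemma nonsingular_of_tropRank_eq {W : Matrix (Fin n) (Fin n) Trop} (h : tropRank W = n) :
    Nonsingular W := by
  set S := {k : ℕ | ∃ (r : Fin k → Fin n) (c : Fin k → Fin n),
    Function.Injective r ∧ Function.Injective c ∧ Nonsingular (fun i j => W (r i) (c j))}
  have hS : S.Nonempty := ⟨0, Fin.elim0, Fin.elim0, fun a => a.elim0, fun a => a.elim0,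
    nonsingular_of_isEmpty _⟩
  have hbdd : BddAbove S := ⟨n, fun k ⟨r, _, hr, _⟩ => by
    simpa using Fintype.card_le_of_injective r hr⟩
  obtain ⟨r, c, hr, hc, hW⟩ : n ∈ S := h ▸ Nat.sSup_mem hS hbdd
  exact (nonsingular_submatrix_iff W (Equiv.ofBijective r hr.bijective_of_finite)
    (Equiv.ofBijective c hc.bijective_of_finite)).mp hW

lemma tPer_ne_bot_of_nonsingular (hn : 2 ≤ n) {W : Matrix (Fin n) (Fin n) Trop}
    (hW : Nonsingular W) : tPer W ≠ ⊥ := by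
  intro hbot
  have hopt : ∀ σ, permWeight W σ = tPer W := fun σ => by
    rw [hbot]
    exact le_bot_iff.mp (hbot ▸ Finset.le_sup (Finset.mem_univ σ))
  have hswap : Equiv.swap (⟨0, by omega⟩ : Fin n) ⟨1, by omega⟩ = 1 :=
    hW.unique (hopt _) (hopt 1)
  simpa [Fin.ext_iff] using Equiv.swap_eq_one_iff.mp hswap

lemma sum_le_tPer (M : Matrix (Fin n) (Fin n) Trop) {f g : Fin n → Fin n}
    (hf : f.Bijective) (hg : g.Bijective) : ∑ i, M (f i) (g i) ≤ tPer M := by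
  let e := Equiv.ofBijective f hf
  let τ := e.symm.trans (Equiv.ofBijective g hg)
  have : ∑ i, M (f i) (g i) = permWeight M τ := by
    rw [permWeight, ← Equiv.sum_comp e (fun k => M k (τ k))]
    simp [e, τ]
  rw [this]
  exact Finset.le_sup (Finset.mem_univ _)

end Permanent

section Paths

def segWeight (M : ℕ → Matrix (Fin n) (Fin n) Trop) (q : ℕ → Fin n) (s t : ℕ) : Trop :=
  ∑ a ∈ Finset.Ico s t, M a (q a) (q (a + 1))

variable (M : ℕ → Matrix (Fin n) (Fin n) Trop)

lemma segWeight_add (q : ℕ → Fin n) {s t m : ℕ} (hst : s ≤ t) (htm : t ≤ m) :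
    segWeight M q s t + segWeight M q t m = segWeight M q s m :=
  Finset.sum_Ico_consecutive _ hst htm

lemma segWeight_congr {q q' : ℕ → Fin n} {s t : ℕ} (h : ∀ a, s ≤ a → a ≤ t → q a = q' a) :
    segWeight M q s t = segWeight M q' s t :=
  Finset.sum_congr rfl fun a ha => by
    obtain ⟨h1, h2⟩ := Finset.mem_Ico.mp ha
    rw [h a h1 h2.le, h (a + 1) (by omega) h2]

lemma segWeight_zero_succ (q : ℕ → Fin n) (ℓ : ℕ) :
    segWeight M q 0 (ℓ + 1) =
      M 0 (q 0) (q 1) + segWeight (fun t => M (t + 1)) (fun t => q (t + 1)) 0 ℓ := by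
  simp only [segWeight, ← Finset.range_eq_Ico, Finset.sum_range_succ', add_comm]

variable (A B : Matrix (Fin n) (Fin n) Trop)

def wordMat (w : List Bool) (t : ℕ) : Matrix (Fin n) (Fin n) Trop :=
  if w.getD t true then A else B

lemma wordMat_cons_zero (x : Bool) (w : List Bool) :
    wordMat A B (x :: w) 0 = if x then A else B := rfl

lemma wordMat_cons_succ (x : Bool) (w : List Bool) :
    (fun t => wordMat A B (x :: w) (t + 1)) = wordMat A B w := rfl

lemma segWeight_le_mEval (w : List Bool) (q : ℕ → Fin n) :
    segWeight (wordMat A B w) q 0 w.length ≤ mEval A B w (q 0) (q w.length) := by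
  induction w generalizing q with
  | nil => simp [segWeight, mEval, tId]
  | cons x w ih =>
    rw [List.length_cons, segWeight_zero_succ, wordMat_cons_zero, wordMat_cons_succ]
    calc _ ≤ (if x then A else B) (q 0) (q 1) + mEval A B w (q 1) (q (w.length + 1)) :=
          add_le_add_right (ih _) _
      _ ≤ mEval A B (x :: w) (q 0) (q (w.length + 1)) :=
          Finset.le_sup (f := fun k => (if x then A else B) (q 0) k + mEval A B w k _)
            (Finset.mem_univ (q 1))

lemma exists_segWeight_eq_mEval (w : List Bool) {i j : Fin n} (h : mEval A B w i j ≠ ⊥) :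
    ∃ q : ℕ → Fin n, q 0 = i ∧ q w.length = j ∧
      segWeight (wordMat A B w) q 0 w.length = mEval A B w i j := by
  induction w generalizing i with
  | nil =>
    obtain rfl : i = j := by
      by_contra hij
      exact h (by simp [mEval, tId, hij])
    exact ⟨fun _ => i, rfl, rfl, by simp [segWeight, mEval, tId]⟩
  | cons x w ih =>
    obtain ⟨k, -, hk⟩ := Finset.exists_mem_eq_sup Finset.univ ⟨i, Finset.mem_univ i⟩
      (fun k => (if x then A else B) i k + mEval A B w k j)
    have hk' : mEval A B (x :: w) i j = (if x then A else B) i k + mEval A B w k j := hk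
    have hkj : mEval A B w k j ≠ ⊥ := fun hbot => h (by rw [hk', hbot, WithBot.add_bot])
    obtain ⟨q, rfl, hql, hqw⟩ := ih hkj
    refine ⟨fun | 0 => i | t + 1 => q t, rfl, hql, ?_⟩
    rw [List.length_cons, segWeight_zero_succ, wordMat_cons_zero, wordMat_cons_succ, hk']
    exact congrArg _ hqw

end Paths

section Diagonal

variable {A B : Matrix (Fin n) (Fin n) Trop}

lemma tPer_wordMat (hA : tPer A = tTrace A) (hB : tPer B = tTrace B) (w : List Bool) (t : ℕ) :
    tPer (wordMat A B w t) = tTrace (wordMat A B w t) := by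
  unfold wordMat
  split_ifs <;> assumption

lemma sum_segWeight_exchange_tails (M : ℕ → Matrix (Fin n) (Fin n) Trop) (q : Fin n → ℕ → Fin n)
    (σ : Equiv.Perm (Fin n)) {t ℓ : ℕ} (htℓ : t ≤ ℓ) (hσ : ∀ j, q j t = q (σ j) t) :
    ∑ j, segWeight M (fun a => if a ≤ t then q j a else q (σ j) a) 0 ℓ =
      ∑ j, segWeight M (q j) 0 ℓ := by
  have hsplit : ∀ j, segWeight M (fun a => if a ≤ t then q j a else q (σ j) a) 0 ℓ =
      segWeight M (q j) 0 t + segWeight M (q (σ j)) t ℓ := by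
    intro j
    rw [← segWeight_add M _ (Nat.zero_le t) htℓ,
      segWeight_congr M (q' := q j) fun a _ ha => if_pos ha,
      segWeight_congr M (q' := q (σ j)) (s := t) (t := ℓ) fun a hta _ => ?_]
    split_ifs with hat
    · rw [le_antisymm hat hta, hσ]
    · rfl
  rw [Finset.sum_congr rfl fun j _ => hsplit j, Finset.sum_add_distrib,
    Equiv.sum_comp σ (fun j => segWeight M (q j) t ℓ), ← Finset.sum_add_distrib]
  exact Finset.sum_congr rfl fun j _ => segWeight_add M _ (Nat.zero_le t) htℓ

lemma injective_layer_of_optimal {w : List Bool} {π : Equiv.Perm (Fin n)}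
    (hπ : permWeight (mEval A B w) π = tPer (mEval A B w))
    (huniq : ∀ σ, permWeight (mEval A B w) σ = tPer (mEval A B w) → σ = π)
    {q : Fin n → ℕ → Fin n} (hq0 : ∀ i, q i 0 = i) (hql : ∀ i, q i w.length = π i)
    (hqw : ∀ i, segWeight (wordMat A B w) (q i) 0 w.length = mEval A B w i (π i))
    {t : ℕ} (ht : t ≤ w.length) : Function.Injective (fun i => q i t) := by
  set W := mEval A B w
  intro i i' hii'
  simp only at hii'
  rcases ht.eq_or_lt with rfl | ht
  · exact π.injective ((hql i).symm.trans (hii'.trans (hql i')))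
  by_contra hne
  set σ := Equiv.swap i i'
  have hσ : ∀ j, q j t = q (σ j) t := by
    intro j
    by_cases h1 : j = i
    · simp [σ, h1, hii']
    by_cases h2 : j = i'
    · simp [σ, h2, hii']
    · rw [Equiv.swap_apply_of_ne_of_ne h1 h2]
  -- exchanging the tails of the paths of `i` and `i'` at their common node realises `π * σ`
  set r : Fin n → ℕ → Fin n := fun j a => if a ≤ t then q j a else q (σ j) a
  have hr_le : ∀ j, segWeight (wordMat A B w) (r j) 0 w.length ≤ W j ((π * σ) j) := by
    intro j
    have h0 : r j 0 = j := by simp [r, hq0]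
    have hℓ : r j w.length = (π * σ) j := by simp [r, hql, not_le.mpr ht]
    calc _ ≤ W (r j 0) (r j w.length) := segWeight_le_mEval A B w (r j)
      _ = W j ((π * σ) j) := by rw [h0, hℓ]
  have hle : tPer W ≤ permWeight W (π * σ) := calc
    tPer W = ∑ j, segWeight (wordMat A B w) (q j) 0 w.length := by
        rw [← hπ]
        exact Finset.sum_congr rfl fun j _ => (hqw j).symm
    _ = ∑ j, segWeight (wordMat A B w) (r j) 0 w.length :=
        (sum_segWeight_exchange_tails _ q σ ht.le hσ).symm
    _ ≤ permWeight W (π * σ) := Finset.sum_le_sum fun j _ => hr_le j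
  have hσ1 : σ = 1 := mul_eq_left.mp
    (huniq _ (le_antisymm (Finset.le_sup (Finset.mem_univ _)) hle))
  exact hne (Equiv.swap_eq_one_iff.mp hσ1)

variable (A B) in
def DiagEqLoopWeight (w : List Bool) : Prop :=
  ∀ k, segWeight (wordMat A B w) (fun _ => k) 0 w.length = mEval A B w k k ∧ mEval A B w k k ≠ ⊥

theorem diagEqLoopWeight_of_nonsingular (hn : 2 ≤ n) (hA : tPer A = tTrace A)
    (hB : tPer B = tTrace B) {w : List Bool} (hW : Nonsingular (mEval A B w)) :
    DiagEqLoopWeight A B w := by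
  set M := wordMat A B w
  set W := mEval A B w
  set ℓ := w.length
  have hper := tPer_ne_bot_of_nonsingular hn hW
  obtain ⟨π, hπ, huniq⟩ := hW
  have hfin : ∀ i, W i (π i) ≠ ⊥ := by
    simpa [← hπ, permWeight, WithBot.sum_eq_bot_iff] using hper
  choose q hq0 hql hqw using fun i => exists_segWeight_eq_mEval A B w (hfin i)
  have hlayer : ∀ t ≤ ℓ, (fun i => q i t).Bijective := fun t ht =>
    (injective_layer_of_optimal hπ huniq hq0 hql hqw ht).bijective_of_finite
  have hper_le : tPer W ≤ ∑ k, segWeight M (fun _ => k) 0 ℓ := calc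
    tPer W = ∑ i, segWeight M (q i) 0 ℓ := by
        rw [← hπ]
        exact Finset.sum_congr rfl fun i _ => (hqw i).symm
    _ = ∑ t ∈ Finset.Ico 0 ℓ, ∑ i, M t (q i t) (q i (t + 1)) := Finset.sum_comm
    _ ≤ ∑ t ∈ Finset.Ico 0 ℓ, tPer (M t) := Finset.sum_le_sum fun t ht => by
        obtain ⟨-, ht⟩ := Finset.mem_Ico.mp ht
        exact sum_le_tPer _ (hlayer t ht.le) (hlayer (t + 1) ht)
    _ = ∑ t ∈ Finset.Ico 0 ℓ, tTrace (M t) :=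
        Finset.sum_congr rfl fun t _ => tPer_wordMat hA hB w t
    _ = ∑ k, segWeight M (fun _ => k) 0 ℓ := Finset.sum_comm
  have hdiag_le : ∑ k, W k k ≤ tPer W := Finset.le_sup (f := permWeight W) (Finset.mem_univ 1)
  have hloop_le : ∀ k, segWeight M (fun _ => k) 0 ℓ ≤ W k k := fun k =>
    segWeight_le_mEval A B w _
  have hsum : ∑ k, segWeight M (fun _ => k) 0 ℓ = ∑ k, W k k :=
    le_antisymm (Finset.sum_le_sum fun k _ => hloop_le k) (hdiag_le.trans hper_le)
  have hsum_fin : ∑ k, W k k ≠ ⊥ := fun h => hper (le_bot_iff.mp (h ▸ hsum ▸ hper_le))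
  have hdiag_fin : ∀ k, W k k ≠ ⊥ := by simpa [WithBot.sum_eq_bot_iff] using hsum_fin
  exact fun k => ⟨WithBot.eq_of_sum_eq_sum_of_le (fun k _ => hloop_le k) hsum hsum_fin k
    (Finset.mem_univ k), hdiag_fin k⟩

end Diagonal

section NoReturn

def NoReturn (q : ℕ → Fin n) (ℓ : ℕ) : Prop :=
  ∀ s r t, s ≤ r → r ≤ t → t ≤ ℓ → q s = q t → q r = q s

def moves (q : ℕ → Fin n) (ℓ : ℕ) : Finset ℕ :=
  (Finset.range ℓ).filter fun a => q a ≠ q (a + 1)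

lemma exists_move_of_ne {q : ℕ → Fin n} {s r : ℕ} (hsr : s ≤ r) (h : q s ≠ q r) :
    ∃ a ∈ Finset.Ico s r, q a ≠ q (a + 1) := by
  induction r, hsr using Nat.le_induction with
  | base => exact absurd rfl h
  | succ r hsr ih =>
    by_cases hr : q r = q (r + 1)
    · obtain ⟨a, ha, hma⟩ := ih (hr ▸ h)
      exact ⟨a, Finset.Ico_subset_Ico_right r.le_succ ha, hma⟩
    · exact ⟨r, Finset.mem_Ico.mpr ⟨hsr, r.lt_succ_self⟩, hr⟩

def splice (p p' : ℕ → Fin n) (s t a : ℕ) : Fin n :=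
  if s ≤ a ∧ a ≤ t then p' a else p a

variable {p p' : ℕ → Fin n} {s t : ℕ}

lemma splice_of_mem_Icc {a : ℕ} (h1 : s ≤ a) (h2 : a ≤ t) : splice p p' s t a = p' a :=
  if_pos ⟨h1, h2⟩

lemma splice_of_le_or_le (hs : p s = p' s) (ht : p t = p' t) {a : ℕ} (ha : a ≤ s ∨ t ≤ a) :
    splice p p' s t a = p a := by
  unfold splice
  split_ifs with h
  · obtain rfl | rfl : a = s ∨ a = t := by omega
    exacts [hs.symm, ht.symm]
  · rfl

lemma segWeight_eq_add_add (M : ℕ → Matrix (Fin n) (Fin n) Trop) (q : ℕ → Fin n) (hst : s ≤ t)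
    {ℓ : ℕ} (htℓ : t ≤ ℓ) :
    segWeight M q 0 ℓ = segWeight M q 0 s + segWeight M q s t + segWeight M q t ℓ := by
  rw [segWeight_add M q (Nat.zero_le s) hst, segWeight_add M q (Nat.zero_le t) htℓ]

lemma segWeight_splice (M : ℕ → Matrix (Fin n) (Fin n) Trop) (hs : p s = p' s)
    (ht : p t = p' t) (hst : s ≤ t) {ℓ : ℕ} (htℓ : t ≤ ℓ) :
    segWeight M (splice p p' s t) 0 ℓ =
      segWeight M p 0 s + segWeight M p' s t + segWeight M p t ℓ := by
  rw [segWeight_eq_add_add M _ hst htℓ,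
    segWeight_congr M (q' := p) (s := 0) (t := s)
      fun a _ ha => splice_of_le_or_le hs ht (Or.inl ha),
    segWeight_congr M (q' := p') (s := s) (t := t) fun a h1 h2 => splice_of_mem_Icc h1 h2,
    segWeight_congr M (q' := p) (s := t) (t := ℓ)
      fun a ha _ => splice_of_le_or_le hs ht (Or.inr ha)]

lemma moves_splice_const_ssubset {q : ℕ → Fin n} {ℓ r : ℕ} (hst : q s = q t) (htℓ : t ≤ ℓ)
    (hsr : s ≤ r) (hrt : r ≤ t) (hr : q r ≠ q s) :
    moves (splice q (fun _ => q s) s t) ℓ ⊂ moves q ℓ := by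
  have hout : ∀ a, a ≤ s ∨ t ≤ a → splice q (fun _ => q s) s t a = q a :=
    fun a => splice_of_le_or_le (p' := fun _ => q s) rfl hst.symm
  obtain ⟨a, ha, hmove⟩ := exists_move_of_ne hsr (Ne.symm hr)
  obtain ⟨hsa, har⟩ := Finset.mem_Ico.mp ha
  refine Finset.ssubset_iff_of_subset (fun b hb => ?_) |>.mpr ⟨a, ?_, ?_⟩
  · simp only [moves, Finset.mem_filter, Finset.mem_range] at hb ⊢
    refine ⟨hb.1, fun hqb => hb.2 ?_⟩
    by_cases hmid : s ≤ b ∧ b + 1 ≤ t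
    · rw [splice_of_mem_Icc hmid.1 (by omega), splice_of_mem_Icc (by omega) hmid.2]
    · rw [hout b (by omega), hout (b + 1) (by omega), hqb]
  · simp only [moves, Finset.mem_filter, Finset.mem_range]
    exact ⟨by omega, hmove⟩
  · simp only [moves, Finset.mem_filter, not_and, not_not]
    intro _
    rw [splice_of_mem_Icc hsa (by omega), splice_of_mem_Icc (by omega) (by omega)]

end NoReturn

section OptimalPaths

variable {A B : Matrix (Fin n) (Fin n) Trop} {w : List Bool}

/-- Inserting the closed subpath `q|[s,t]` into the loop at `q s` yields a closed walk, whose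
weight is bounded by the diagonal entry, i.e. by the loop weight; cancel the common parts. -/
lemma segWeight_le_loop (hdiag : DiagEqLoopWeight A B w) (q : ℕ → Fin n) {s t : ℕ}
    (hst : s ≤ t) (htℓ : t ≤ w.length) (hq : q s = q t) :
    segWeight (wordMat A B w) q s t ≤ segWeight (wordMat A B w) (fun _ => q s) s t := by
  set M := wordMat A B w
  set c : ℕ → Fin n := fun _ => q s
  have hs : c s = q s := rfl
  have ht : c t = q t := hq
  have hloop : segWeight M (splice c q s t) 0 w.length ≤ segWeight M c 0 w.length := calc
    _ ≤ mEval A B w (splice c q s t 0) (splice c q s t w.length) := segWeight_le_mEval A B w _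
    _ = segWeight M c 0 w.length := by
      rw [splice_of_le_or_le hs ht (Or.inl (Nat.zero_le s)),
        splice_of_le_or_le hs ht (Or.inr htℓ)]
      exact (hdiag (q s)).1.symm
  rw [segWeight_splice M hs ht hst htℓ, segWeight_eq_add_add M c hst htℓ] at hloop
  have hfin := (hdiag (q s)).2
  rw [← (hdiag (q s)).1, segWeight_eq_add_add M c hst htℓ] at hfin
  simp only [ne_eq, WithBot.add_eq_bot, not_or] at hfin
  exact (WithBot.add_le_add_iff_left hfin.1.1).mp ((WithBot.add_le_add_iff_right hfin.2).mp hloop)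

lemma segWeight_le_splice_loop (hdiag : DiagEqLoopWeight A B w) (q : ℕ → Fin n) {s t : ℕ}
    (hst : s ≤ t) (htℓ : t ≤ w.length) (hq : q s = q t) :
    segWeight (wordMat A B w) q 0 w.length ≤
      segWeight (wordMat A B w) (splice q (fun _ => q s) s t) 0 w.length := by
  rw [segWeight_splice _ (p' := fun _ => q s) rfl hq.symm hst htℓ, segWeight_eq_add_add _ q hst htℓ]
  gcongr
  exact segWeight_le_loop hdiag q hst htℓ hq

/-- An optimal path with the fewest moves has no returns: otherwise replacing a return by a
stay in place keeps it optimal and removes moves. -/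
theorem exists_noReturn_path (hdiag : DiagEqLoopWeight A B w) {i j : Fin n}
    (h : mEval A B w i j ≠ ⊥) :
    ∃ q : ℕ → Fin n, q 0 = i ∧ q w.length = j ∧
      mEval A B w i j ≤ segWeight (wordMat A B w) q 0 w.length ∧ NoReturn q w.length := by
  obtain ⟨q, hq0, hql, hqw⟩ := exists_segWeight_eq_mEval A B w h
  replace hqw := hqw.ge
  induction hN : (moves q w.length).card using Nat.strong_induction_on generalizing q with
  | _ N ih =>
    by_cases hq : NoReturn q w.length
    · exact ⟨q, hq0, hql, hqw, hq⟩
    simp only [NoReturn, not_forall] at hq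
    obtain ⟨s, r, t, hsr, hrt, htℓ, hst, hr⟩ := hq
    have hout : ∀ a, a ≤ s ∨ t ≤ a → splice q (fun _ => q s) s t a = q a :=
      fun a => splice_of_le_or_le (p' := fun _ => q s) rfl hst.symm
    exact ih _ (hN ▸ Finset.card_lt_card (moves_splice_const_ssubset hst htℓ hsr hrt hr)) _
      ((hout 0 (Or.inl (Nat.zero_le s))).trans hq0) ((hout _ (Or.inr htℓ)).trans hql)
      (hqw.trans (segWeight_le_splice_loop hdiag q (hsr.trans hrt) htℓ hst)) rfl

end OptimalPaths

section UpperTriangular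

/-- Order the nodes by the time `q` first visits them, unvisited nodes last. -/
lemma exists_perm_monotone_of_noReturn {q : ℕ → Fin n} {ℓ : ℕ} (hq : NoReturn q ℓ) :
    ∃ ρ : Equiv.Perm (Fin n), ∀ s t, s ≤ t → t ≤ ℓ → ρ.symm (q s) ≤ ρ.symm (q t) := by
  let f : Fin n → ℕ := fun y => if h : ∃ a, a ≤ ℓ ∧ q a = y then Nat.find h else ℓ + 1 + y
  have hf_visit : ∀ t ≤ ℓ, f (q t) ≤ t ∧ q (f (q t)) = q t := by
    intro t ht
    have hex : ∃ a, a ≤ ℓ ∧ q a = q t := ⟨t, ht, rfl⟩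
    simp only [f, dif_pos hex]
    exact ⟨Nat.find_min' hex ⟨ht, rfl⟩, (Nat.find_spec hex).2⟩
  have hf_inj : f.Injective := by
    intro y z hyz
    simp only [f] at hyz
    split_ifs at hyz with hy hz hz
    · rw [← (Nat.find_spec hy).2, ← (Nat.find_spec hz).2, hyz]
    · have := (Nat.find_spec hy).1
      omega
    · have := (Nat.find_spec hz).1
      omega
    · exact Fin.ext (by omega)
  have hf_mono : ∀ s t, s ≤ t → t ≤ ℓ → f (q s) ≤ f (q t) := by
    intro s t hst htℓ
    by_contra hlt
    obtain ⟨-, hqvisit⟩ := hf_visit t htℓ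
    have := (hf_visit s (hst.trans htℓ)).1
    have hs := hq _ s t (by omega) hst htℓ hqvisit
    rw [hs, hqvisit] at hlt
    exact hlt le_rfl
  let ρ := Tuple.sort f
  have hρ : StrictMono (f ∘ ρ) :=
    (Tuple.monotone_sort f).strictMono_of_injective (hf_inj.comp ρ.injective)
  refine ⟨ρ, fun s t hst htℓ => hρ.le_iff_le.mp ?_⟩
  simpa using hf_mono s t hst htℓ

lemma upperTri_of_le_one (hn : n ≤ 1) (X : Matrix (Fin n) (Fin n) Trop) : UpperTri X :=
  fun i j hji => absurd hji (by omega)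

def upperPart (ρ : Equiv.Perm (Fin n)) (A : Matrix (Fin n) (Fin n) Trop) :
    Matrix (Fin n) (Fin n) Trop :=
  fun a b => if a ≤ b then A (ρ a) (ρ b) else ⊥

variable {A B : Matrix (Fin n) (Fin n) Trop} {ρ : Equiv.Perm (Fin n)}

lemma upperTri_upperPart : UpperTri (upperPart ρ A) :=
  fun _ _ hba => if_neg (not_le.mpr hba)

lemma wordMat_upperPart (w : List Bool) (t : ℕ) :
    wordMat (upperPart ρ A) (upperPart ρ B) w t = upperPart ρ (wordMat A B w t) := by
  unfold wordMat
  split_ifs <;> rfl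

lemma mEval_upperPart_le (w : List Bool) (a b : Fin n) :
    mEval (upperPart ρ A) (upperPart ρ B) w a b ≤ mEval A B w (ρ a) (ρ b) := by
  by_cases h : mEval (upperPart ρ A) (upperPart ρ B) w a b = ⊥
  · simp [h]
  obtain ⟨r, rfl, rfl, hr⟩ := exists_segWeight_eq_mEval _ _ w h
  rw [← hr]
  calc _ ≤ segWeight (wordMat A B w) (fun t => ρ (r t)) 0 w.length :=
        Finset.sum_le_sum fun t _ => by
          rw [wordMat_upperPart]
          unfold upperPart
          split_ifs
          exacts [le_rfl, bot_le]
    _ ≤ _ := segWeight_le_mEval A B w _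

lemma segWeight_upperPart_of_monotone {w : List Bool} {q : ℕ → Fin n}
    (hmono : ∀ s t, s ≤ t → t ≤ w.length → ρ.symm (q s) ≤ ρ.symm (q t)) :
    segWeight (wordMat (upperPart ρ A) (upperPart ρ B) w) (fun a => ρ.symm (q a)) 0 w.length =
      segWeight (wordMat A B w) q 0 w.length :=
  Finset.sum_congr rfl fun t ht => by
    obtain ⟨-, ht⟩ := Finset.mem_Ico.mp ht
    rw [wordMat_upperPart]
    simp [upperPart, hmono t (t + 1) t.le_succ ht]

theorem mEval_le_of_upperTri_identity {u v : List Bool}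
    (hid : ∀ X Y : Matrix (Fin n) (Fin n) Trop, UpperTri X → UpperTri Y →
      mEval X Y u = mEval X Y v)
    (hdiag : DiagEqLoopWeight A B u) (i j : Fin n) : mEval A B u i j ≤ mEval A B v i j := by
  by_cases h : mEval A B u i j = ⊥
  · simp [h]
  obtain ⟨q, rfl, rfl, hqw, hq⟩ := exists_noReturn_path hdiag h
  obtain ⟨ρ, hρ⟩ := exists_perm_monotone_of_noReturn hq
  set X := upperPart ρ A
  set Y := upperPart ρ B
  calc mEval A B u (q 0) (q u.length) ≤ segWeight (wordMat A B u) q 0 u.length := hqw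
    _ = segWeight (wordMat X Y u) (fun a => ρ.symm (q a)) 0 u.length :=
        (segWeight_upperPart_of_monotone hρ).symm
    _ ≤ mEval X Y u (ρ.symm (q 0)) (ρ.symm (q u.length)) := segWeight_le_mEval X Y u _
    _ = mEval X Y v (ρ.symm (q 0)) (ρ.symm (q u.length)) := by
        rw [hid X Y upperTri_upperPart upperTri_upperPart]
    _ ≤ mEval A B v (ρ (ρ.symm (q 0))) (ρ (ρ.symm (q u.length))) := mEval_upperPart_le v _ _
    _ = mEval A B v (q 0) (q u.length) := by simp

end UpperTriangular

end TropMatrix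

theorem full_rank_identity_general {n : ℕ} (u v : List Bool)
    (hid : ∀ X Y : Matrix (Fin n) (Fin n) Trop, UpperTri X → UpperTri Y →
      mEval X Y u = mEval X Y v)
    (A B : Matrix (Fin n) (Fin n) Trop)
    (hA : tPer A = tTrace A) (hB : tPer B = tTrace B)
    (hru : tropRank (mEval A B u) = n) (hrv : tropRank (mEval A B v) = n) :
    mEval A B u = mEval A B v := by
  by_cases hn : n ≤ 1
  · exact hid A B (TropMatrix.upperTri_of_le_one hn A) (TropMatrix.upperTri_of_le_one hn B)
  have hn2 : 2 ≤ n := by omega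
  have hdu := TropMatrix.diagEqLoopWeight_of_nonsingular hn2 hA hB
    (TropMatrix.nonsingular_of_tropRank_eq hru)
  have hdv := TropMatrix.diagEqLoopWeight_of_nonsingular hn2 hA hB
    (TropMatrix.nonsingular_of_tropRank_eq hrv)
  funext i j
  exact le_antisymm (TropMatrix.mEval_le_of_upperTri_identity hid hdu i j)
    (TropMatrix.mEval_le_of_upperTri_identity (fun X Y hX hY => (hid X Y hX hY).symm) hdv i j)

/-- identities for matrices of full tropical rank.  If `(u,v)` is a
semigroup identity of the monoid `U_n(𝕋)` of upper triangular tropical matrices, and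
`A, B` satisfy `per(A) = tr(A)`, `per(B) = tr(B)` and
`rk_tr(u(A,B)) = rk_tr(v(A,B)) = n`, then `u(A,B) = v(A,B)`. -/
theorem full_rank_identity {n : ℕ} (u v : List Bool)
    (hu : u ≠ []) (hv : v ≠ []) (huv : u ≠ v)
    (hid : ∀ X Y : Matrix (Fin n) (Fin n) Trop, UpperTri X → UpperTri Y →
      mEval X Y u = mEval X Y v)
    (A B : Matrix (Fin n) (Fin n) Trop)
    (hA : tPer A = tTrace A) (hB : tPer B = tTrace B)
    (hru : tropRank (mEval A B u) = n) (hrv : tropRank (mEval A B v) = n) :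
    mEval A B u = mEval A B v :=
  full_rank_identity_general u v hid A B hA hB hru hrv
end
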